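/- arXiv:2008.04011 — 11 statements merged into one kernel-verified Lean document; each statement's English description precedes it below -/
import Mathlib

section
/- Each BCT associator α_{A,B,C} is a bijection, and the pentagon coherence identity holds: for all types A, B, C, D and every element (((a,b,s₁),c,s₂),d,s₃) of ((A⊗B)⊗C)⊗D, the composite α_{A,B,C⊗D} ∘ α_{A⊗B,C,D} agrees with the composite (id_A ⊗ α_{B,C,D}) ∘ α_{A,B⊗C,D} ∘ (α_{A,B,C} ⊗ id_D) (where f ⊗ id and id ⊗ f act on the indicated component and leave the other components and the outer sign unchanged), both sides being equal to (a,(b,(c,d,s₂·s₃),s₁·s₂),s₁). -/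
/-- The sign group `{+1, -1}` under multiplication. -/
abbrev G : Type := ℤˣ

/-- BCT parallel composition of (pure-state index) types: `A ⊗ B = A × B × G`. -/
abbrev Tens (A B : Type) : Type := A × B × G

/-- The BCT associator `α_{A,B,C} : (A ⊗ B) ⊗ C → A ⊗ (B ⊗ C)`,
`((a,b,s₁),c,s₂) ↦ (a,(b,c,s₁·s₂),s₁)`. -/
def assoc (A B C : Type) : Tens (Tens A B) C → Tens A (Tens B C) :=
  fun x => (x.1.1, (x.1.2.1, x.2.1, x.1.2.2 * x.2.2), x.1.2.2)

/-- `f ⊗ id_C`: acts on the first component, leaving the second component and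
the outer sign unchanged. -/
def tensorRight {A B : Type} (f : A → B) (C : Type) : Tens A C → Tens B C :=
  fun x => (f x.1, x.2.1, x.2.2)

/-- `id_A ⊗ f`: acts on the second component, leaving the first component and
the outer sign unchanged. -/
def tensorLeft (A : Type) {B C : Type} (f : B → C) : Tens A B → Tens A C :=
  fun x => (x.1, f x.2.1, x.2.2)

def assocInv (A B C : Type) : Tens A (Tens B C) → Tens (Tens A B) C :=
  fun x => ((x.1, x.2.1.1, x.2.2), x.2.1.2.1, x.2.2⁻¹ * x.2.1.2.2)

/-- Each BCT associator is a bijection, and the pentagon coherence identity holds: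
both composites `α_{A,B,C⊗D} ∘ α_{A⊗B,C,D}` and
`(id_A ⊗ α_{B,C,D}) ∘ α_{A,B⊗C,D} ∘ (α_{A,B,C} ⊗ id_D)` send
`(((a,b,s₁),c,s₂),d,s₃)` to `(a,(b,(c,d,s₂·s₃),s₁·s₂),s₁)`. -/
theorem bct_associator_bijective_and_pentagon :
    (∀ A B C : Type, Function.Bijective (assoc A B C)) ∧
    (∀ (A B C D : Type) (a : A) (b : B) (c : C) (d : D) (s₁ s₂ s₃ : G),
      assoc A B (Tens C D) (assoc (Tens A B) C D ((((a, b, s₁), c, s₂), d, s₃))) =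
        (a, (b, (c, d, s₂ * s₃), s₁ * s₂), s₁) ∧
      tensorLeft A (assoc B C D)
          (assoc A (Tens B C) D
            (tensorRight (assoc A B C) D ((((a, b, s₁), c, s₂), d, s₃)))) =
        (a, (b, (c, d, s₂ * s₃), s₁ * s₂), s₁)) := by
  constructor
  · intro A B C
    apply Function.bijective_iff_has_inverse.mpr
    refine ⟨assocInv A B C, ?_, ?_⟩
    · rintro ⟨⟨a, b, s₁⟩, c, s₂⟩
      simp [assoc, assocInv, ← mul_assoc, Int.units_mul_self]
    · rintro ⟨a, ⟨b, c, t⟩, s⟩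
      simp [assoc, assocInv, ← mul_assoc, Int.units_mul_self]
  · intro A B C D a b c d s₁ s₂ s₃
    constructor
    · simp [assoc, mul_assoc]
    · simp only [assoc, tensorLeft, tensorRight]
      have h : s₁ * s₂ * (s₁ * s₃) = s₂ * s₃ := by
        rw [mul_comm s₁ s₂, mul_assoc, ← mul_assoc s₁ s₁, Int.units_mul_self, one_mul]
      rw [h]
end

section
/- The BCT braiding and associator satisfy the hexagon identity: for all types A, B, C and every element ((a,b,s₁),c,s₂) of (A⊗B)⊗C, one has α_{B,C,A}(β_{A,B⊗C}(α_{A,B,C}(((a,b,s₁),c,s₂)))) = (id_B ⊗ S_{A,C})(α_{B,A,C}((S_{A,B} ⊗ id_C)(((a,b,s₁),c,s₂)))), both sides being equal to (b,(c,a,s₂),s₁·s₂). -/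
/-- The BCT braiding `β_{X,Y}` on a bipartition: the sign-preserving swap
`(x,y,s) ↦ (y,x,s)`. -/
def braid (A B : Type) : Tens A B → Tens B A :=
  fun x => (x.2.1, x.1, x.2.2)

/-- `S_{A,B} ⊗ id_C` on `(A⊗B)⊗C`: `((a,b,s),c,t) ↦ ((b,a,s),c,s·t)` --- when the
braided pair lies inside a composite, the outer sign is multiplied by the inner
sign of the braided pair. -/
def braidTensorRight (A B C : Type) : Tens (Tens A B) C → Tens (Tens B A) C :=
  fun x => ((x.1.2.1, x.1.1, x.1.2.2), x.2.1, x.1.2.2 * x.2.2)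

/-- `id_B ⊗ S_{A,C}` on `B⊗(A⊗C)`: `(b,(a,c,v),w) ↦ (b,(c,a,v),v·w)`. -/
def braidTensorLeft (B A C : Type) : Tens B (Tens A C) → Tens B (Tens C A) :=
  fun x => (x.1, (x.2.1.2.1, x.2.1.1, x.2.1.2.2), x.2.1.2.2 * x.2.2)

/-- The BCT braiding and associator satisfy the hexagon identity: both
`α_{B,C,A} ∘ β_{A,B⊗C} ∘ α_{A,B,C}` and
`(id_B ⊗ S_{A,C}) ∘ α_{B,A,C} ∘ (S_{A,B} ⊗ id_C)` send `((a,b,s₁),c,s₂)` to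
`(b,(c,a,s₂),s₁·s₂)`. -/
theorem bct_hexagon :
    ∀ (A B C : Type) (a : A) (b : B) (c : C) (s₁ s₂ : G),
      assoc B C A (braid A (Tens B C) (assoc A B C (((a, b, s₁), c, s₂)))) =
        (b, (c, a, s₂), s₁ * s₂) ∧
      braidTensorLeft B A C
          (assoc B A C (braidTensorRight A B C (((a, b, s₁), c, s₂)))) =
        (b, (c, a, s₂), s₁ * s₂) := by
  intro A B C a b c s₁ s₂
  constructor <;>
    simp [assoc, braid, braidTensorRight, braidTensorLeft, mul_assoc, mul_comm,
      mul_left_comm] <;>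
    rw [← mul_assoc, Int.units_mul_self, one_mul]
end

section
/- For all positive integers a, b: (i) the linear span of the set of product states {P(ρ,σ) : ρ ∈ ℝ^(Fin a), σ ∈ ℝ^(Fin b)} equals the subspace {w ∈ V : w(i,j,+1) = w(i,j,−1) for all i, j}, whose dimension is a·b, strictly less than dim V = 2·a·b; (ii) every product effect, i.e. every functional of the form w ↦ ∑_{i,j,s} x i · y j · w(i,j,s) with x ∈ ℝ^(Fin a) and y ∈ ℝ^(Fin b), assigns the same value to the two distinct deterministic pure states e(i,j,+1) and e(i,j,−1). Hence product effects do not separate the states of a composite BCT system: BCT violates local discriminability. -/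
/-- Parallel composition of single-system states in BCT:
`P(ρ,σ)(i,j,s) = ρ i · σ j / 2`. -/
noncomputable def P (a b : ℕ) (ρ : Fin a → ℝ) (σ : Fin b → ℝ) : Fin a × Fin b × G → ℝ :=
  fun p => ρ p.1 * σ p.2.1 / 2

/-- The pure states of the bipartite composite: standard basis vectors `e(i,j,s)`. -/
noncomputable def e (a b : ℕ) (p : Fin a × Fin b × G) : Fin a × Fin b × G → ℝ :=
  Pi.single p 1

/-- The subspace of `V` of vectors with sign-independent coordinates:
`{w | w(i,j,+1) = w(i,j,−1) for all i, j}`. -/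
def symmSub (a b : ℕ) : Submodule ℝ (Fin a × Fin b × G → ℝ) where
  carrier := {w | ∀ (i : Fin a) (j : Fin b), w (i, j, 1) = w (i, j, -1)}
  add_mem' := by
    intro x y hx hy i j
    simp only [Pi.add_apply, hx i j, hy i j]
  zero_mem' := by intro i j; rfl
  smul_mem' := by
    intro c x hx i j
    simp only [Pi.smul_apply, hx i j]

/-- The sign-independent subspace is linearly equivalent to `ℝ^(Fin a × Fin b)`. -/
noncomputable def symmEquiv (a b : ℕ) : symmSub a b ≃ₗ[ℝ] (Fin a × Fin b → ℝ) where
  toFun w := fun q => (w : Fin a × Fin b × G → ℝ) (q.1, q.2, 1)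
  map_add' := fun x y => rfl
  map_smul' := fun c x => rfl
  invFun f := ⟨fun p => f (p.1, p.2.1), fun i j => rfl⟩
  left_inv := by
    rintro ⟨w, hw⟩
    ext ⟨i, j, s⟩
    rcases Int.units_eq_one_or s with h | h <;> subst h
    · rfl
    · exact hw i j
  right_inv := fun f => rfl


/-- (i) The span of the product states `P(ρ,σ)` is exactly the sign-independent
subspace, of dimension `a·b`, strictly less than `dim V = 2·a·b`; (ii) every
product effect `w ↦ ∑_{i,j,s} x i · y j · w(i,j,s)` assigns the same value to the
two distinct deterministic pure states `e(i,j,+1)` and `e(i,j,−1)`.  Hence product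
effects do not separate the states of a composite BCT system: BCT violates local
discriminability. -/
theorem bct_violates_local_discriminability (a b : ℕ) (ha : 0 < a) (hb : 0 < b) :
    (Submodule.span ℝ {w | ∃ (ρ : Fin a → ℝ) (σ : Fin b → ℝ), w = P a b ρ σ} =
      symmSub a b) ∧
    Module.finrank ℝ (symmSub a b) = a * b ∧
    Module.finrank ℝ (Fin a × Fin b × G → ℝ) = 2 * (a * b) ∧
    a * b < Module.finrank ℝ (Fin a × Fin b × G → ℝ) ∧
    (∀ (x : Fin a → ℝ) (y : Fin b → ℝ) (i : Fin a) (j : Fin b),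
      (∑ p : Fin a × Fin b × G, x p.1 * y p.2.1 * e a b (i, j, 1) p) =
        (∑ p : Fin a × Fin b × G, x p.1 * y p.2.1 * e a b (i, j, -1) p) ∧
      e a b (i, j, 1) ≠ e a b (i, j, -1)) := by

  have hcard : Fintype.card (Fin a × Fin b × G) = 2 * (a * b) := by
    simp [Fintype.card_prod]; ring
  have hV : Module.finrank ℝ (Fin a × Fin b × G → ℝ) = 2 * (a * b) := by
    rw [Module.finrank_fintype_fun_eq_card, hcard]
  have hsym : Module.finrank ℝ (symmSub a b) = a * b := by
    rw [(symmEquiv a b).finrank_eq, Module.finrank_fintype_fun_eq_card]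
    simp
  refine ⟨?_, hsym, hV, by rw [hV]; nlinarith, ?_⟩
  · apply le_antisymm
    · rw [Submodule.span_le]
      rintro w ⟨ρ, σ, rfl⟩ i j
      rfl
    · intro w hw
      have hrep : w = ∑ q : Fin a × Fin b,
          P a b (Pi.single q.1 1) (Pi.single q.2 (2 * w (q.1, q.2, 1))) := by
        funext p
        rw [Finset.sum_apply]
        rw [Finset.sum_eq_single (p.1, p.2.1)]
        · have : w p = w (p.1, p.2.1, 1) := by
            obtain ⟨i, j, s⟩ := p
            rcases Int.units_eq_one_or s with h | h <;> subst h
            · rfl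
            · exact (hw i j).symm
          simp [P, this]
        · rintro ⟨i, j⟩ _ hne
          have : p.1 ≠ i ∨ p.2.1 ≠ j := by
            by_contra h
            push_neg at h
            exact hne (by rw [← h.1, ← h.2])
          rcases this with h | h <;>
            simp [P, Pi.single_apply, Ne.symm h]
        · intro h
          exact absurd (Finset.mem_univ _) h
      rw [hrep]
      exact Submodule.sum_mem _ fun q _ =>
        Submodule.subset_span ⟨_, _, rfl⟩
  · intro x y i j
    constructor
    · have h1 : ∀ (s : G), (∑ p : Fin a × Fin b × G,
          x p.1 * y p.2.1 * e a b (i, j, s) p) = x i * y j := by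
        intro s
        rw [Finset.sum_eq_single (i, j, s)]
        · simp [e]
        · intro p _ hne
          simp [e, Pi.single_apply, hne]
        · intro h
          exact absurd (Finset.mem_univ _) h
      rw [h1, h1]
    · intro h
      have := congrFun h (i, j, 1)
      simp only [e, Pi.single_apply] at this
      norm_num at this
end

section
/- For all positive integers a, b and every index (i,j,s) ∈ Fin a × Fin b × G, the pure state e(i,j,s) of the bipartite BCT composite is entangled: it cannot be written as a finite sum of products P(α,β) with α, β entrywise nonnegative and nonzero. (Every pure state of a composite system in BCT is entangled.) -/
/-- A vector of the bipartite composite space is separable if it is a finite sum of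
products `P(α,β)` with `α`, `β` entrywise nonnegative and nonzero. -/
noncomputable def Separable (a b : ℕ) (w : Fin a × Fin b × G → ℝ) : Prop :=
  ∃ (n : ℕ) (α : Fin n → Fin a → ℝ) (β : Fin n → Fin b → ℝ),
    (∀ k, (∀ i, 0 ≤ α k i) ∧ α k ≠ 0 ∧ (∀ j, 0 ≤ β k j) ∧ β k ≠ 0) ∧
    w = ∑ k, P a b (α k) (β k)

/-- Every pure state `e(i,j,s)` of the bipartite BCT composite is entangled, i.e.
not separable. -/
theorem bct_pure_states_entangled (a b : ℕ) (ha : 0 < a) (hb : 0 < b)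
    (i : Fin a) (j : Fin b) (s : G) :
    ¬ Separable a b (Pi.single (i, j, s) 1) := by
  rintro ⟨n, α, β, hk, hw⟩
  have hne : ((i, j, -s) : Fin a × Fin b × G) ≠ (i, j, s) := by
    intro h
    have hs : -s = s := (Prod.mk.injEq _ _ _ _ ▸ ((Prod.mk.injEq _ _ _ _ ▸ h).2)).2
    have : (-s : G).val = s.val := by rw [hs]
    simp only [Units.val_neg] at this
    have : (s : ℤ) = 0 := by linarith
    exact s.ne_zero this
  have h1 := congrFun hw (i, j, s)
  have h2 := congrFun hw (i, j, -s)
  rw [Pi.single_eq_same] at h1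
  rw [Pi.single_eq_of_ne hne] at h2
  have hsum : (∑ k, P a b (α k) (β k)) (i, j, s) =
      (∑ k, P a b (α k) (β k)) (i, j, -s) := by
    simp [P, Finset.sum_apply]
  exact one_ne_zero (h1.trans (hsum.trans h2.symm))
end

section
/- For all i ∈ Fin a and j ∈ Fin b, the parallel composition of the pure states e i and e j is the uniform mixture P(e i, e j) = (1/2)·e(i,j,+1) + (1/2)·e(i,j,−1). Consequently P(e i, e j) is a deterministic state that is not an extreme point of the standard simplex of V (BCT violates purity of parallel composition of states), and it is the sum of two nonproportional entrywise-nonnegative vectors, hence not atomic (BCT violates atomicity of parallel composition of states). -/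
/-- A vector of the composite space is atomic if in any decomposition into a sum of
two entrywise-nonnegative vectors, the two summands are proportional. -/
def Atomic (a b : ℕ) (w : Fin a × Fin b × G → ℝ) : Prop :=
  ∀ u v : Fin a × Fin b × G → ℝ, (∀ p, 0 ≤ u p) → (∀ p, 0 ≤ v p) → w = u + v →
    (∃ c : ℝ, u = c • v) ∨ (∃ c : ℝ, v = c • u)

theorem not_exists_eq_smul_of_apply_ne_zero {ι R M : Type*} [Zero M] [SMulZeroClass R M]
    {u v : ι → M} {p : ι} (hu : u p ≠ 0) (hv : v p = 0) : ¬ ∃ c : R, u = c • v := by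
  rintro ⟨c, rfl⟩
  simp [hv] at hu

theorem half_smul_add_half_smul_notMem_extremePoints {E : Type*} [AddCommGroup E]
    [Module ℝ E] {A : Set E} {x y : E} (hx : x ∈ A) (hy : y ∈ A) (hxy : x ≠ y) :
    (1 / 2 : ℝ) • x + (1 / 2 : ℝ) • y ∉ A.extremePoints ℝ := by
  intro h
  have hseg : (1 / 2 : ℝ) • x + (1 / 2 : ℝ) • y ∈ openSegment ℝ x y :=
    ⟨1 / 2, 1 / 2, by norm_num, by norm_num, by norm_num, rfl⟩
  have hmid : x = (1 / 2 : ℝ) • x + (1 / 2 : ℝ) • y := h.2 hx hy hseg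
  apply hxy
  linear_combination (norm := module) (2 : ℝ) • hmid

theorem not_atomic_of_eq_add {a b : ℕ} {w u v : Fin a × Fin b × G → ℝ}
    (hu : ∀ p, 0 ≤ u p) (hv : ∀ p, 0 ≤ v p) (hw : w = u + v)
    (huv : ¬ ∃ c : ℝ, u = c • v) (hvu : ¬ ∃ c : ℝ, v = c • u) : ¬ Atomic a b w :=
  fun h => (h u v hu hv hw).elim huv hvu

theorem P_single_one_single_one (a b : ℕ) (i : Fin a) (j : Fin b) :
    P a b (Pi.single i 1) (Pi.single j 1) =
      (1 / 2 : ℝ) • e a b (i, j, 1) + (1 / 2 : ℝ) • e a b (i, j, -1) := by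
  funext ⟨x, y, s⟩
  rcases Int.units_eq_one_or s with rfl | rfl <;>
    by_cases hx : x = i <;> by_cases hy : y = j <;>
    simp [P, e, hx, hy]

theorem bct_violates_purity_and_atomicity_of_parallel_composition_general
    (a b : ℕ) (i : Fin a) (j : Fin b) :
    P a b (Pi.single i 1) (Pi.single j 1) =
      (1 / 2 : ℝ) • e a b (i, j, 1) + (1 / 2 : ℝ) • e a b (i, j, -1) ∧
    P a b (Pi.single i 1) (Pi.single j 1) ∈ stdSimplex ℝ (Fin a × Fin b × G) ∧
    P a b (Pi.single i 1) (Pi.single j 1) ∉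
      Set.extremePoints ℝ (stdSimplex ℝ (Fin a × Fin b × G)) ∧
    (∃ u v : Fin a × Fin b × G → ℝ,
      (∀ p, 0 ≤ u p) ∧ (∀ p, 0 ≤ v p) ∧
      P a b (Pi.single i 1) (Pi.single j 1) = u + v ∧
      (¬ ∃ c : ℝ, u = c • v) ∧ (¬ ∃ c : ℝ, v = c • u)) ∧
    ¬ Atomic a b (P a b (Pi.single i 1) (Pi.single j 1)) := by
  have hP := P_single_one_single_one a b i j
  have hsign : (i, j, (1 : G)) ≠ (i, j, -1) := by simp
  have hplus := single_mem_stdSimplex ℝ (i, j, (1 : G))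
  have hminus := single_mem_stdSimplex ℝ (i, j, (-1 : G))
  have hne : e a b (i, j, 1) ≠ e a b (i, j, -1) := fun h => by
    simpa [e, hsign] using congrFun h (i, j, 1)
  set u := (1 / 2 : ℝ) • e a b (i, j, 1)
  set v := (1 / 2 : ℝ) • e a b (i, j, -1)
  have hu (p) : 0 ≤ u p := mul_nonneg (by norm_num) (hplus.1 p)
  have hv (p) : 0 ≤ v p := mul_nonneg (by norm_num) (hminus.1 p)
  have huv : ¬ ∃ c : ℝ, u = c • v :=
    not_exists_eq_smul_of_apply_ne_zero (p := (i, j, 1)) (by simp [u, e]) (by simp [v, e, hsign])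
  have hvu : ¬ ∃ c : ℝ, v = c • u :=
    not_exists_eq_smul_of_apply_ne_zero (p := (i, j, -1)) (by simp [v, e])
      (by simp [u, e, hsign.symm])
  refine ⟨hP, ?_, ?_, ⟨u, v, hu, hv, hP, huv, hvu⟩, not_atomic_of_eq_add hu hv hP huv hvu⟩
  · rw [hP]
    exact convex_stdSimplex ℝ _ hplus hminus (by norm_num) (by norm_num) (by norm_num)
  · rw [hP]
    exact half_smul_add_half_smul_notMem_extremePoints hplus hminus hne

/-- The parallel composition of two pure states is the uniform mixture
`P(e i, e j) = (1/2)·e(i,j,+1) + (1/2)·e(i,j,−1)`; it is a deterministic state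
that is not an extreme point of the simplex (violation of purity of parallel
composition) and is a sum of two nonproportional nonnegative vectors, hence not
atomic (violation of atomicity of parallel composition). -/
theorem bct_violates_purity_and_atomicity_of_parallel_composition
    (a b : ℕ) (ha : 0 < a) (hb : 0 < b) (i : Fin a) (j : Fin b) :
    P a b (Pi.single i 1) (Pi.single j 1) =
      (1 / 2 : ℝ) • e a b (i, j, 1) + (1 / 2 : ℝ) • e a b (i, j, -1) ∧
    P a b (Pi.single i 1) (Pi.single j 1) ∈ stdSimplex ℝ (Fin a × Fin b × G) ∧
    P a b (Pi.single i 1) (Pi.single j 1) ∉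
      Set.extremePoints ℝ (stdSimplex ℝ (Fin a × Fin b × G)) ∧
    (∃ u v : Fin a × Fin b × G → ℝ,
      (∀ p, 0 ≤ u p) ∧ (∀ p, 0 ≤ v p) ∧
      P a b (Pi.single i 1) (Pi.single j 1) = u + v ∧
      (¬ ∃ c : ℝ, u = c • v) ∧ (¬ ∃ c : ℝ, v = c • u)) ∧
    ¬ Atomic a b (P a b (Pi.single i 1) (Pi.single j 1)) :=
  bct_violates_purity_and_atomicity_of_parallel_composition_general a b i j
end

section
/- For all positive integers a, b, c: (i) the union of the images of the three composition maps P₁₂, P₂₃, P₁₃ spans the whole tripartite space W = ℝ^(Fin a × Fin b × Fin c × G × G), of dimension 4·a·b·c; (ii) the set of triple products {P₁₂(P(ρ,σ), γ) : ρ ∈ ℝ^(Fin a), σ ∈ ℝ^(Fin b), γ ∈ ℝ^(Fin c)} spans only the subspace of vectors whose coordinates are independent of the sign pair (s₁,s₂), of dimension a·b·c, which is a proper subspace of W. Hence BCT satisfies bilocal discriminability but not local discriminability: BCT is strictly bilocal-tomographic (Proposition 3). -/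
/-- The tripartite composite space `W = ℝ^(Fin a × Fin b × Fin c × G × G)`, whose
standard basis vector at `(i,j,k,s₁,s₂)` encodes the pure state `((ij)_{s₁}k)_{s₂}`. -/
abbrev W (a b c : ℕ) : Type := Fin a × Fin b × Fin c × G × G → ℝ

/-- Composition `AB` with `C`: the bilinear map with
`P₁₂(e(i,j,s), e k) = (1/2)·∑_{t∈G} E(i,j,k,s,t)`. -/
noncomputable def P12 (a b c : ℕ) (w : Fin a × Fin b × G → ℝ) (γ : Fin c → ℝ) :
    W a b c :=
  fun q => w (q.1, q.2.1, q.2.2.2.1) * γ q.2.2.1 / 2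

/-- Composition `A` with `BC`: the bilinear map with
`P₂₃(e i, e(j,k,t)) = (1/2)·∑_{u∈G} E(i,j,k,u,u·t)`. -/
noncomputable def P23 (a b c : ℕ) (ρ : Fin a → ℝ) (v : Fin b × Fin c × G → ℝ) :
    W a b c :=
  fun q => ρ q.1 * v (q.2.1, q.2.2.1, q.2.2.2.1 * q.2.2.2.2) / 2

/-- Composition `AC` with `B`: the bilinear map with
`P₁₃(e(i,k,t), e j) = (1/2)·∑_{u∈G} E(i,j,k,u,t)`. -/
noncomputable def P13 (a b c : ℕ) (v : Fin a × Fin c × G → ℝ) (β : Fin b → ℝ) :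
    W a b c :=
  fun q => v (q.1, q.2.2.1, q.2.2.2.2) * β q.2.1 / 2

/-- The subspace of `W` of vectors whose coordinates are independent of the sign
pair `(s₁,s₂)`. -/
def signIndep (a b c : ℕ) : Submodule ℝ (W a b c) where
  carrier := {w | ∀ (i : Fin a) (j : Fin b) (k : Fin c) (s₁ s₂ s₁' s₂' : G),
    w (i, j, k, s₁, s₂) = w (i, j, k, s₁', s₂')}
  add_mem' := by
    intro x y hx hy i j k s₁ s₂ s₁' s₂'
    simp only [Pi.add_apply, hx i j k s₁ s₂ s₁' s₂', hy i j k s₁ s₂ s₁' s₂']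
  zero_mem' := by intro i j k s₁ s₂ s₁' s₂'; rfl
  smul_mem' := by
    intro r x hx i j k s₁ s₂ s₁' s₂'
    simp only [Pi.smul_apply, hx i j k s₁ s₂ s₁' s₂']

noncomputable def δ {α : Type*} [DecidableEq α] (x : α) : α → ℝ := fun y => if y = x then 1 else 0

lemma single_eq (a b c : ℕ) (i : Fin a) (j : Fin b) (k : Fin c) (s₁ s₂ : G) :
    Pi.single (i,j,k,s₁,s₂) (1:ℝ) =
      P12 a b c (δ (i,j,s₁)) (δ k) + P13 a b c (δ (i,k,s₂)) (δ j)
        - P23 a b c (δ i) (δ (j,k,-(s₁*s₂))) := by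
  funext q
  obtain ⟨i',j',k',t₁,t₂⟩ := q
  simp only [P12, P13, P23, δ, Pi.single_apply, Pi.add_apply, Pi.sub_apply, Prod.mk.injEq]
  by_cases hi : i' = i
  · by_cases hj : j' = j
    · by_cases hk : k' = k
      · subst hi; subst hj; subst hk
        rcases Int.units_eq_one_or s₁ with rfl | rfl <;>
        rcases Int.units_eq_one_or s₂ with rfl | rfl <;>
        rcases Int.units_eq_one_or t₁ with rfl | rfl <;>
        rcases Int.units_eq_one_or t₂ with rfl | rfl <;>
        norm_num [Units.ext_iff]
      · simp [hk]
    · simp [hj]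
  · simp [hi]

lemma tripleProd_eq (a b c : ℕ) (w : W a b c) (hw : w ∈ signIndep a b c) :
    w = ∑ p : Fin a × Fin b × Fin c,
      (4 * w (p.1, p.2.1, p.2.2, 1, 1)) • P12 a b c (P a b (δ p.1) (δ p.2.1)) (δ p.2.2) := by
  funext q
  obtain ⟨i,j,k,s₁,s₂⟩ := q
  rw [Finset.sum_apply]
  rw [Finset.sum_eq_single (i,j,k)]
  · have h1 := hw i j k 1 1 s₁ s₂
    simp [P12, P, δ, ← h1]
    ring
  · rintro ⟨i',j',k'⟩ _ hp
    simp only [Pi.smul_apply, P12, P, δ, smul_eq_mul]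
    have : ¬ (i = i' ∧ j = j' ∧ k = k') := by
      rintro ⟨rfl, rfl, rfl⟩; exact hp rfl
    by_cases h1 : i = i'
    · by_cases h2 : j = j'
      · by_cases h3 : k = k'
        · exact absurd ⟨h1, h2, h3⟩ this
        · simp [h3]
      · simp [h2]
    · simp [h1]
  · intro h; exact absurd (Finset.mem_univ _) h

noncomputable def Φ (a b c : ℕ) : (Fin a × Fin b × Fin c → ℝ) →ₗ[ℝ] W a b c where
  toFun f := fun q => f (q.1, q.2.1, q.2.2.1)
  map_add' _ _ := rfl
  map_smul' _ _ := rfl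

lemma range_Φ (a b c : ℕ) : LinearMap.range (Φ a b c) = signIndep a b c := by
  ext w
  constructor
  · rintro ⟨f, rfl⟩ i j k s₁ s₂ s₁' s₂'; rfl
  · intro hw
    refine ⟨fun p => w (p.1, p.2.1, p.2.2, 1, 1), ?_⟩
    funext q
    obtain ⟨i,j,k,s₁,s₂⟩ := q
    exact hw i j k 1 1 s₁ s₂

/-- BCT is strictly bilocal-tomographic (Proposition 3): (i) the images of the
three bipartite-with-single compositions `P₁₂, P₂₃, P₁₃` together span all of `W`
(dimension `4·a·b·c`); (ii) the triple products `P₁₂(P(ρ,σ),γ)` span only the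
sign-independent subspace, of dimension `a·b·c`, a proper subspace of `W`. -/
theorem bct_strictly_bilocal_tomographic (a b c : ℕ)
    (ha : 0 < a) (hb : 0 < b) (hc : 0 < c) :
    Submodule.span ℝ
        ({w | ∃ v γ, w = P12 a b c v γ} ∪ {w | ∃ ρ v, w = P23 a b c ρ v} ∪
          {w | ∃ v β, w = P13 a b c v β}) = ⊤ ∧
    Module.finrank ℝ (W a b c) = 4 * (a * b * c) ∧
    Submodule.span ℝ
        {w | ∃ (ρ : Fin a → ℝ) (σ : Fin b → ℝ) (γ : Fin c → ℝ),
          w = P12 a b c (P a b ρ σ) γ} = signIndep a b c ∧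
    Module.finrank ℝ (signIndep a b c) = a * b * c ∧
    signIndep a b c < ⊤ := by
  refine ⟨?_, ?_, ?_, ?_, ?_⟩
  · -- span of union = ⊤
    rw [eq_top_iff, ← (Pi.basisFun ℝ (Fin a × Fin b × Fin c × G × G)).span_eq]
    refine Submodule.span_le.2 ?_
    rintro _ ⟨q, rfl⟩
    obtain ⟨i,j,k,s₁,s₂⟩ := q
    have : (Pi.basisFun ℝ (Fin a × Fin b × Fin c × G × G)) (i,j,k,s₁,s₂)
        = Pi.single (i,j,k,s₁,s₂) (1:ℝ) := by
      simp [Pi.basisFun_apply]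
    rw [SetLike.mem_coe, this, single_eq]
    refine Submodule.sub_mem _ (Submodule.add_mem _ ?_ ?_) ?_
    · exact Submodule.subset_span (Or.inl (Or.inl ⟨_, _, rfl⟩))
    · exact Submodule.subset_span (Or.inr ⟨_, _, rfl⟩)
    · exact Submodule.subset_span (Or.inl (Or.inr ⟨_, _, rfl⟩))
  · -- finrank W
    rw [Module.finrank_fintype_fun_eq_card]
    simp [Fintype.card_units_int]
    ring
  · -- span of triple products = signIndep
    apply le_antisymm
    · refine Submodule.span_le.2 ?_
      rintro _ ⟨ρ, σ, γ, rfl⟩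
      intro i j k s₁ s₂ s₁' s₂'
      rfl
    · intro w hw
      rw [tripleProd_eq a b c w hw]
      exact Submodule.sum_mem _ fun p _ =>
        Submodule.smul_mem _ _ (Submodule.subset_span ⟨_, _, _, rfl⟩)
  · -- finrank signIndep
    have hinj : Function.Injective (Φ a b c) := by
      intro f g h
      funext p
      have := congrFun h (p.1, p.2.1, p.2.2, 1, 1)
      simpa [Φ] using this
    rw [← range_Φ, LinearMap.finrank_range_of_inj hinj,
      Module.finrank_fintype_fun_eq_card]
    simp [mul_assoc]
  · -- proper subspace
    refine lt_of_le_of_ne le_top fun h => ?_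
    have hmem : Pi.single (⟨0,ha⟩, ⟨0,hb⟩, ⟨0,hc⟩, (1:G), (1:G)) (1:ℝ) ∈ signIndep a b c := by
      rw [h]; trivial
    have := hmem ⟨0,ha⟩ ⟨0,hb⟩ ⟨0,hc⟩ 1 1 (-1) 1
    simp [Pi.single_apply, Prod.ext_iff, Units.ext_iff] at this
end

section
/- The operation g(x,y) = 2xy − x − y + 1 on positive integers satisfies: g(x,1) = x = g(1,x); g(x,y) = g(y,x); g(g(x,y),z) = g(x,g(y,z)) (associativity); g(x,y) > x·y whenever x ≥ 2 and y ≥ 2 (homogeneous strictness); and the bilocal-tomographic dimension identity g(g(x,y),z) = x·y·z + Δ(x,y)·z + Δ(y,z)·x + Δ(x,z)·y, where Δ(u,v) = g(u,v) − u·v. Hence homogeneous strict bilocal tomography alone does not single out BCT's composition rule D_{AB} = 2·D_A·D_B. -/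
/-- The alternative composition rule `g(x,y) = 2xy − x − y + 1`. -/
def g (x y : ℤ) : ℤ := 2 * x * y - x - y + 1

/-- The excess of a composite's dimension over the product of its components'
dimensions: `Δ(u,v) = g(u,v) − u·v`. -/
def Δ (u v : ℤ) : ℤ := g u v - u * v

/-- The operation `g(x,y) = 2xy − x − y + 1` on positive integers has `1` as unit,
is commutative and associative, strictly exceeds `x·y` whenever `x, y ≥ 2`
(homogeneous strictness), and satisfies the bilocal-tomographic dimension
identity; yet it differs from BCT's rule `D_{AB} = 2·D_A·D_B`.  Hence homogeneous
strict bilocal tomography alone does not single out BCT's composition rule. -/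
theorem alternative_bilocal_composition_rule (x y z : ℤ)
    (hx : 0 < x) (hy : 0 < y) (hz : 0 < z) :
    g x 1 = x ∧ g 1 x = x ∧
    g x y = g y x ∧
    g (g x y) z = g x (g y z) ∧
    (2 ≤ x → 2 ≤ y → x * y < g x y) ∧
    g (g x y) z = x * y * z + Δ x y * z + Δ y z * x + Δ x z * y ∧
    (∃ u v : ℤ, 0 < u ∧ 0 < v ∧ g u v ≠ 2 * u * v) := by
  refine ⟨by simp [g]; ring, by simp [g]; ring, by simp [g]; ring, by simp [g]; ring,
    fun h2x h2y => ?_, by simp [g, Δ]; ring, ⟨1, 1, one_pos, one_pos, by simp [g]⟩⟩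
  have : x * y - x - y + 1 = (x - 1) * (y - 1) := by ring
  have h : 0 < (x - 1) * (y - 1) := mul_pos (by omega) (by omega)
  simp only [g]; nlinarith
end

section
/- Define, for a nonempty list d₁, …, dₙ of positive integers, the composite dimension by the BCT rule D₁ = d₁ and D_{k+1} = 2·D_k·d_{k+1}. Then Dₙ = 2^(n−1) · ∏_{i=1}^n dᵢ. In particular, a composite of n bibits (dᵢ = 2 for all i) has dimension 2^(2n−1), i.e. it possesses exactly 2^(2n−1) jointly perfectly discriminable pure states, so n bibits carry exactly 2n − 1 classical bits (the dense-coding performance and additive classical capacity of BCT). -/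
/-- The BCT composite dimension of the list `d 0, d 1, …, d k`:
`D₁ = d₁` and `D_{k+1} = 2·D_k·d_{k+1}` (Postulate 2). -/
def compDim (d : ℕ → ℕ) : ℕ → ℕ
  | 0 => d 0
  | k + 1 => 2 * compDim d k * d (k + 1)

lemma compDim_eq (d : ℕ → ℕ) (k : ℕ) :
    compDim d k = 2 ^ k * ∏ i ∈ Finset.range (k + 1), d i := by
  induction k with
  | zero => simp [compDim]
  | succ k ih =>
    rw [compDim, ih, Finset.prod_range_succ d (k + 1), pow_succ]
    ring

/-- For a nonempty list `d 0, …, d (n−1)` of positive integers, the BCT composite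
dimension is `Dₙ = 2^(n−1) · ∏ᵢ dᵢ`.  In particular a composite of `n` bibits
(`dᵢ = 2`) has dimension `2^(2n−1)`, i.e. exactly `2^(2n−1)` jointly perfectly
discriminable pure states, so `n` bibits carry exactly `2n − 1` classical bits. -/
theorem bct_composite_dimension (n : ℕ) (hn : 0 < n) (d : ℕ → ℕ)
    (hd : ∀ i, i < n → 0 < d i) :
    compDim d (n - 1) = 2 ^ (n - 1) * ∏ i ∈ Finset.range n, d i ∧
    ((∀ i, i < n → d i = 2) → compDim d (n - 1) = 2 ^ (2 * n - 1)) := by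
  obtain ⟨m, rfl⟩ := Nat.exists_eq_add_of_lt hn
  simp only [Nat.zero_add, Nat.add_sub_cancel]
  constructor
  · exact compDim_eq d m
  · intro h2
    rw [compDim_eq d m, Finset.prod_congr rfl fun i hi => h2 i (Finset.mem_range.mp hi)]
    rw [Finset.prod_const, Finset.card_range, ← pow_add]
    congr 1
    omega
end

section
/- Let a, b, c be positive integers and let T : ℝ^(Fin a × Fin b × G) → ℝ^(Fin c × Fin b × G) be a linear map such that: (i) T(e(i,j,s)) has nonnegative coordinates for every basis vector e(i,j,s); (ii) there exists a linear map T₀ : ℝ^(Fin a) → ℝ^(Fin c) with C_{j'} ∘ T = T₀ ∘ C_{j'} for every j' ∈ Fin b; (iii) R_{π,σ} ∘ T = T ∘ R_{π,σ} for every permutation π of Fin b and every σ : Fin b → G. Then there exists a nonnegative family λ : Fin a → Fin c → G → ℝ such that T(e(i,j,s)) = ∑_{m,τ} λ i m τ · e(m,j,τ·s) for all i, j, s; in particular the coefficients depend neither on j nor on s. (Every generalized transformation compatible with BCT's local structure is a BCT transformation; Lemma used in the proof of the operational realisation scheme, Appendix B.) -/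
/-- The conditioning map `C_{j'} : ℝ^(Fin x × Fin b × G) → ℝ^(Fin x)`, the linear
map with `C_{j'}(e(i,j,s)) = (if j = j' then e i else 0)` (the steering rule). -/
noncomputable def Cmap (x b : ℕ) (j' : Fin b) :
    ((Fin x × Fin b × G) → ℝ) →ₗ[ℝ] (Fin x → ℝ) where
  toFun w := fun i => ∑ s : G, w (i, j', s)
  map_add' := by
    intro u v
    funext i
    simp [Finset.sum_add_distrib]
  map_smul' := by
    intro r u
    funext i
    simp [Finset.mul_sum, mul_add]

/-- The local reversible transformation `R_{π,σ}` on `ℝ^(Fin x × Fin b × G)`, the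
linear map with `R_{π,σ}(e(i,j,s)) = e(i, π j, σ j · s)` (Postulate 3). -/
def Rmap (x b : ℕ) (π : Equiv.Perm (Fin b)) (σ : Fin b → G) :
    ((Fin x × Fin b × G) → ℝ) →ₗ[ℝ] ((Fin x × Fin b × G) → ℝ) where
  toFun w := fun p => w (p.1, π.symm p.2.1, σ (π.symm p.2.1) * p.2.2)
  map_add' := fun _ _ => rfl
  map_smul' := fun _ _ => rfl

/-- Every generalized transformation compatible with BCT's local structure is a
BCT transformation: if a linear map `T` (i) sends basis vectors to entrywise
nonnegative vectors, (ii) is local (commutes with conditioning on the ancilla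
via some `T₀`), and (iii) commutes with all local reversible transformations of
the ancilla, then `T(e(i,j,s)) = ∑_{m,τ} λ i m τ · e(m,j,τ·s)` for a nonnegative
family `λ` whose coefficients depend neither on `j` nor on `s`. -/
theorem bct_local_transformations_classified (a b c : ℕ)
    (ha : 0 < a) (hb : 0 < b) (hc : 0 < c)
    (T : ((Fin a × Fin b × G) → ℝ) →ₗ[ℝ] ((Fin c × Fin b × G) → ℝ))
    (hpos : ∀ (p : Fin a × Fin b × G) (q : Fin c × Fin b × G),
      0 ≤ T (Pi.single p 1) q)
    (hlocal : ∃ T₀ : (Fin a → ℝ) →ₗ[ℝ] (Fin c → ℝ),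
      ∀ j' : Fin b, (Cmap c b j').comp T = T₀.comp (Cmap a b j'))
    (hcomm : ∀ (π : Equiv.Perm (Fin b)) (σ : Fin b → G),
      (Rmap c b π σ).comp T = T.comp (Rmap a b π σ)) :
    ∃ lam : Fin a → Fin c → G → ℝ,
      (∀ i m τ, 0 ≤ lam i m τ) ∧
      ∀ (i : Fin a) (j : Fin b) (s : G),
        T (Pi.single (i, j, s) 1) =
          ∑ m : Fin c, ∑ τ : G,
            lam i m τ • (Pi.single (m, j, τ * s) 1 : (Fin c × Fin b × G) → ℝ) := by
  classical
  obtain ⟨T₀, hT₀⟩ := hlocal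
  have husq : ∀ u : G, u * u = 1 := fun u => Int.units_mul_self u
  set j₀ : Fin b := ⟨0, hb⟩ with hj₀
  -- Rmap on a basis vector
  have hRsingle : ∀ (x : ℕ) (π : Equiv.Perm (Fin b)) (σ : Fin b → G)
      (i : Fin x) (j : Fin b) (s : G),
      (Rmap x b π σ) (Pi.single (i, j, s) (1:ℝ)) = Pi.single (i, π j, σ j * s) 1 := by
    intro x π σ i j s
    have happ : ∀ (w : (Fin x × Fin b × G) → ℝ) (p : Fin x × Fin b × G),
        (Rmap x b π σ) w p = w (p.1, π.symm p.2.1, σ (π.symm p.2.1) * p.2.2) :=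
      fun _ _ => rfl
    funext p
    obtain ⟨p1, p2, p3⟩ := p
    rw [happ]
    simp only [Pi.single_apply, Prod.mk.injEq]
    congr 1
    apply propext
    constructor
    · rintro ⟨rfl, h2, h3⟩
      refine ⟨rfl, ?_, ?_⟩
      · rw [← h2, Equiv.apply_symm_apply]
      · rw [← h3, ← h2, ← mul_assoc, husq, one_mul]
    · rintro ⟨rfl, rfl, rfl⟩
      refine ⟨rfl, Equiv.symm_apply_apply .., ?_⟩
      rw [Equiv.symm_apply_apply, ← mul_assoc, husq, one_mul]
  -- commutation pointwise
  have hR : ∀ (π : Equiv.Perm (Fin b)) (σ : Fin b → G) (i : Fin a) (j : Fin b) (s : G)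
      (q : Fin c × Fin b × G),
      T (Pi.single (i, π j, σ j * s) 1) q
        = T (Pi.single (i, j, s) 1) (q.1, π.symm q.2.1, σ (π.symm q.2.1) * q.2.2) := by
    intro π σ i j s q
    have h := LinearMap.congr_fun (hcomm π σ) (Pi.single (i,j,s) (1:ℝ))
    rw [LinearMap.comp_apply, LinearMap.comp_apply, hRsingle] at h
    exact (congrFun h q).symm
  -- vanishing off the diagonal in j
  have hzero : ∀ (i : Fin a) (j : Fin b) (s : G) (m : Fin c) (k : Fin b) (τ : G),
      k ≠ j → T (Pi.single (i,j,s) 1) (m,k,τ) = 0 := by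
    intro i j s m k τ hkj
    have h := LinearMap.congr_fun (hT₀ k) (Pi.single (i,j,s) (1:ℝ))
    rw [LinearMap.comp_apply, LinearMap.comp_apply] at h
    have hC : (Cmap a b k) (Pi.single (i,j,s) (1:ℝ)) = 0 := by
      funext i'
      have happ : (Cmap a b k) (Pi.single (i,j,s) (1:ℝ)) i'
          = ∑ s' : G, (Pi.single (i,j,s) (1:ℝ) : (Fin a × Fin b × G) → ℝ) (i', k, s') := rfl
      rw [happ, Pi.zero_apply]
      apply Finset.sum_eq_zero
      intro s' _
      simp [Pi.single_apply, Prod.mk.injEq, hkj]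
    rw [hC, map_zero] at h
    have h0 : ∑ s' : G, T (Pi.single (i,j,s) 1) (m,k,s') = 0 := congrFun h m
    exact (Finset.sum_eq_zero_iff_of_nonneg
      (fun s' _ => hpos (i,j,s) (m,k,s'))).mp h0 τ (Finset.mem_univ τ)
  -- j-invariance
  have hJ : ∀ (i : Fin a) (j : Fin b) (s : G) (m : Fin c) (τ : G),
      T (Pi.single (i,j,s) 1) (m,j,τ) = T (Pi.single (i,j₀,s) 1) (m,j₀,τ) := by
    intro i j s m τ
    have h := hR (Equiv.swap j₀ j) (fun _ => 1) i j₀ s (m, j, τ)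
    simpa [Equiv.swap_apply_left, Equiv.swap_apply_right] using h
  -- sign covariance
  have hS : ∀ (i : Fin a) (s : G) (m : Fin c) (τ : G),
      T (Pi.single (i,j₀,s) 1) (m,j₀,τ) = T (Pi.single (i,j₀,1) 1) (m,j₀, s * τ) := by
    intro i s m τ
    have h := hR (Equiv.refl _) (fun _ => s) i j₀ 1 (m, j₀, τ)
    simpa using h
  refine ⟨fun i m τ => T (Pi.single (i,j₀,1) 1) (m, j₀, τ),
    fun i m τ => hpos _ _, ?_⟩
  intro i j s
  funext q
  obtain ⟨m', k, τ'⟩ := q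
  simp only [Finset.sum_apply, Pi.smul_apply, smul_eq_mul, Pi.single_apply, Prod.mk.injEq]
  by_cases hkj : k = j
  · subst hkj
    rw [hJ, hS]
    have hτ : ∀ τ : G, (τ' = τ * s) = (τ = τ' * s) := by
      intro τ
      apply propext
      constructor
      · rintro rfl
        rw [mul_assoc, husq, mul_one]
      · rintro rfl
        rw [mul_assoc, husq, mul_one]
    have hτsum : ∀ m : Fin c,
        (∑ τ : G, T (Pi.single (i,j₀,1) 1) (m, j₀, τ)
            * if m' = m ∧ k = k ∧ τ' = τ * s then (1:ℝ) else 0)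
          = if m = m' then T (Pi.single (i,j₀,1) 1) (m, j₀, τ' * s) else 0 := by
      intro m
      by_cases hm : m = m'
      · rw [if_pos hm]
        have hterm : ∀ τ : G,
            T (Pi.single (i,j₀,1) 1) (m, j₀, τ)
              * (if m' = m ∧ k = k ∧ τ' = τ * s then (1:ℝ) else 0)
            = if τ = τ' * s then T (Pi.single (i,j₀,1) 1) (m, j₀, τ) else 0 := by
          intro τ
          by_cases h : τ = τ' * s
          · rw [if_pos h, if_pos ⟨hm.symm, rfl, cast (hτ τ).symm h⟩, mul_one]
          · rw [if_neg h, if_neg, mul_zero]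
            rintro ⟨-, -, h3⟩
            exact h (cast (hτ τ) h3)
        rw [Finset.sum_congr rfl fun τ _ => hterm τ]
        exact Fintype.sum_ite_eq' (τ' * s) _
      · rw [if_neg hm]
        apply Finset.sum_eq_zero
        intro τ _
        rw [if_neg, mul_zero]
        rintro ⟨h1, -, -⟩
        exact hm h1.symm
    rw [Finset.sum_congr rfl (fun m _ => hτsum m)]
    rw [mul_comm s τ']
    simp
  · rw [hzero i j s m' k τ' hkj]
    symm
    apply Finset.sum_eq_zero
    intro m _
    apply Finset.sum_eq_zero
    intro τ _
    simp [hkj]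
end

section
/- T_λ is atomic if and only if λ is supported on at most one triple; equivalently, there exist i₀ ∈ Fin a, m₀ ∈ Fin c, τ₀ ∈ G and λ₀ ≥ 0 such that T_λ(e(i,j,s)) = λ₀ · (if i = i₀ then e(m₀, j, τ₀·s) else 0) for all i, j, s. (Classification of the atomic transformations of BCT, Proposition 5.) -/
/-- The BCT transformation `T_λ : ℝ^(Fin a × Fin b × G) → ℝ^(Fin c × Fin b × G)`
associated with a family `λ : Fin a → Fin c → G → ℝ`: the linear map with
`T_λ(e(i,j,s)) = ∑_{m,τ} λ i m τ · e(m,j,τ·s)`. -/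
noncomputable def Tmap (a b c : ℕ) (lam : Fin a → Fin c → G → ℝ) :
    ((Fin a × Fin b × G) → ℝ) →ₗ[ℝ] ((Fin c × Fin b × G) → ℝ) where
  toFun w := fun q => ∑ i : Fin a, ∑ τ : G, lam i q.1 τ * w (i, q.2.1, τ * q.2.2)
  map_add' := by
    intro u v
    funext q
    simp [mul_add, Finset.sum_add_distrib]
  map_smul' := by
    intro r u
    funext q
    simp only [Pi.smul_apply, smul_eq_mul, RingHom.id_apply, Finset.mul_sum]
    exact Finset.sum_congr rfl fun i _ => Finset.sum_congr rfl fun τ _ => by ring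

lemma G_eq_iff (s t τ₀ : G) : s * t = τ₀ ↔ t = τ₀ * s := by
  constructor
  · rintro rfl; rw [mul_comm s t, mul_assoc, Int.units_mul_self, mul_one]
  · rintro rfl; rw [mul_comm τ₀ s, ← mul_assoc, Int.units_mul_self, one_mul]

lemma Tmap_single_apply (a b c : ℕ) (lam : Fin a → Fin c → G → ℝ)
    (i : Fin a) (j : Fin b) (s : G) (m : Fin c) (j' : Fin b) (t : G) :
    Tmap a b c lam (Pi.single (i, j, s) 1) (m, j', t) =
      if j' = j then lam i m (s * t) else 0 := by
  have key : ∀ (i' : Fin a) (τ : G),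
      (Pi.single (i, j, s) (1:ℝ) : (Fin a × Fin b × G) → ℝ) (i', j', τ * t) =
        if i' = i then (if τ = s * t then (if j' = j then 1 else 0) else 0) else 0 := by
    intro i' τ
    rw [Pi.single_apply]
    have hτ : (τ * t = s) ↔ (τ = s * t) := by
      constructor
      · rintro rfl
        rw [mul_assoc, Int.units_mul_self, mul_one]
      · rintro rfl
        rw [mul_assoc, Int.units_mul_self, mul_one]
    by_cases h1 : i' = i <;> by_cases h2 : τ = s * t <;> by_cases h3 : j' = j <;>
      simp_all [Prod.ext_iff]
  simp only [Tmap, LinearMap.coe_mk, AddHom.coe_mk, key, mul_ite, mul_one, mul_zero]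
  rw [Finset.sum_eq_single i]
  · rw [Finset.sum_eq_single (s * t)]
    · simp
    · intro τ _ hτ; simp [hτ]
    · intro h; exact absurd (Finset.mem_univ _) h
  · intro i' _ hi; simp [hi]
  · intro h; exact absurd (Finset.mem_univ _) h

lemma Tmap_eval (a b c : ℕ) (lam : Fin a → Fin c → G → ℝ)
    (i : Fin a) (j : Fin b) (m : Fin c) (τ : G) :
    Tmap a b c lam (Pi.single (i, j, (1:G)) 1) (m, j, τ) = lam i m τ := by
  rw [Tmap_single_apply]; simp

lemma Tmap_add (a b c : ℕ) (μ ν : Fin a → Fin c → G → ℝ) :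
    Tmap a b c (fun i m τ => μ i m τ + ν i m τ) = Tmap a b c μ + Tmap a b c ν := by
  apply LinearMap.ext; intro w; funext q
  simp [Tmap, add_mul, Finset.sum_add_distrib]

lemma Tmap_smul (a b c : ℕ) (r : ℝ) (ν : Fin a → Fin c → G → ℝ) :
    Tmap a b c (fun i m τ => r * ν i m τ) = r • Tmap a b c ν := by
  apply LinearMap.ext; intro w; funext q
  simp [Tmap, Finset.mul_sum, mul_add, mul_assoc]

lemma lam_eq_of_Tmap_eq {a b c : ℕ} (hb : 0 < b) {μ ν : Fin a → Fin c → G → ℝ}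
    (h : Tmap a b c μ = Tmap a b c ν) : ∀ i m τ, μ i m τ = ν i m τ := by
  intro i m τ
  have := congrFun (congrArg (fun (T : ((Fin a × Fin b × G) → ℝ) →ₗ[ℝ] ((Fin c × Fin b × G) → ℝ)) =>
    T (Pi.single (i, ⟨0, hb⟩, (1:G)) 1)) h) (m, ⟨0, hb⟩, τ)
  simpa [Tmap_eval] using this


/-- `T_λ` is atomic: whenever `T_λ = T_μ + T_ν` with `μ`, `ν` nonnegative
families, `T_μ` and `T_ν` are proportional. -/
def AtomicT (a b c : ℕ) (lam : Fin a → Fin c → G → ℝ) : Prop :=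
  ∀ μ ν : Fin a → Fin c → G → ℝ,
    (∀ i m τ, 0 ≤ μ i m τ) → (∀ i m τ, 0 ≤ ν i m τ) →
    Tmap a b c lam = Tmap a b c μ + Tmap a b c ν →
    (∃ r : ℝ, Tmap a b c μ = r • Tmap a b c ν) ∨
      (∃ r : ℝ, Tmap a b c ν = r • Tmap a b c μ)

lemma atomic_iff_subsingleton (a b c : ℕ) (hb : 0 < b)
    (lam : Fin a → Fin c → G → ℝ) (hlam : ∀ i m τ, 0 ≤ lam i m τ) :
    AtomicT a b c lam ↔
      {p : Fin a × Fin c × G | lam p.1 p.2.1 p.2.2 ≠ 0}.Subsingleton := by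
  constructor
  · intro hat p hp q hq
    by_contra hpq
    set μ : Fin a → Fin c → G → ℝ := fun i m τ => if (i, m, τ) = p then lam i m τ else 0 with hμdef
    set ν : Fin a → Fin c → G → ℝ := fun i m τ => if (i, m, τ) = p then 0 else lam i m τ with hνdef
    have hμ : ∀ i m τ, 0 ≤ μ i m τ := by
      intro i m τ; dsimp [μ]; split
      · exact hlam i m τ
      · exact le_refl 0
    have hν : ∀ i m τ, 0 ≤ ν i m τ := by
      intro i m τ; dsimp [ν]; split
      · exact le_refl 0
      · exact hlam i m τ
    have hsplit : lam = fun i m τ => μ i m τ + ν i m τ := by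
      funext i m τ; dsimp [μ, ν]; split <;> simp
    have heq : Tmap a b c lam = Tmap a b c μ + Tmap a b c ν :=
      (congrArg (Tmap a b c) hsplit).trans (Tmap_add a b c μ ν)
    obtain ⟨pi, pm, pτ⟩ := p
    obtain ⟨qi, qm, qτ⟩ := q
    rcases hat μ ν hμ hν heq with ⟨r, hr⟩ | ⟨r, hr⟩
    · have hpt := lam_eq_of_Tmap_eq hb (hr.trans (Tmap_smul a b c r ν).symm) pi pm pτ
      dsimp [μ, ν] at hpt
      simp only [if_true, mul_zero, if_pos] at hpt
      exact hp hpt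
    · have hpt := lam_eq_of_Tmap_eq hb (hr.trans (Tmap_smul a b c r μ).symm) qi qm qτ
      dsimp [μ, ν] at hpt
      rw [if_neg (fun h => hpq h.symm), if_neg (fun h => hpq h.symm)] at hpt
      rw [mul_zero] at hpt
      exact hq hpt
  · intro hsub μ ν hμ hν heq
    have hsum : ∀ i m τ, lam i m τ = μ i m τ + ν i m τ :=
      lam_eq_of_Tmap_eq hb (heq.trans (Tmap_add a b c μ ν).symm)
    by_cases hν0 : ∀ i m τ, ν i m τ = 0
    · right; refine ⟨0, ?_⟩
      have : ν = fun i m τ => 0 * μ i m τ := by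
        funext i m τ; simp [hν0]
      exact (congrArg (Tmap a b c) this).trans (Tmap_smul a b c 0 μ)
    · push_neg at hν0
      obtain ⟨i₁, m₁, τ₁, hν1⟩ := hν0
      left
      refine ⟨μ i₁ m₁ τ₁ / ν i₁ m₁ τ₁, ?_⟩
      have hν1' : 0 < ν i₁ m₁ τ₁ := lt_of_le_of_ne (hν i₁ m₁ τ₁) (Ne.symm hν1)
      have hmem : (i₁, m₁, τ₁) ∈ {p : Fin a × Fin c × G | lam p.1 p.2.1 p.2.2 ≠ 0} := by
        simp only [Set.mem_setOf_eq]
        have := hsum i₁ m₁ τ₁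
        nlinarith [hμ i₁ m₁ τ₁]
      have hpt : μ = fun i m τ => (μ i₁ m₁ τ₁ / ν i₁ m₁ τ₁) * ν i m τ := by
        funext i m τ
        by_cases hc' : (i, m, τ) = ((i₁, m₁, τ₁) : Fin a × Fin c × G)
        · obtain ⟨rfl, rfl, rfl⟩ := Prod.mk.injEq .. ▸ (by
            simpa [Prod.ext_iff] using hc' : i = i₁ ∧ m = m₁ ∧ τ = τ₁)
          field_simp
        · have hz : lam i m τ = 0 := by
            by_contra h0
            exact hc' (hsub h0 hmem)
          have h1 : μ i m τ = 0 ∧ ν i m τ = 0 := by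
            constructor <;> nlinarith [hsum i m τ, hμ i m τ, hν i m τ]
          rw [h1.1, h1.2, mul_zero]
      exact (congrArg (Tmap a b c) hpt).trans (Tmap_smul a b c _ ν)

lemma subsingleton_iff_formula (a b c : ℕ) (ha : 0 < a) (hb : 0 < b) (hc : 0 < c)
    (lam : Fin a → Fin c → G → ℝ) (hlam : ∀ i m τ, 0 ≤ lam i m τ) :
    {p : Fin a × Fin c × G | lam p.1 p.2.1 p.2.2 ≠ 0}.Subsingleton ↔
      ∃ (i₀ : Fin a) (m₀ : Fin c) (τ₀ : G) (lam₀ : ℝ), 0 ≤ lam₀ ∧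
        ∀ (i : Fin a) (j : Fin b) (s : G),
          Tmap a b c lam (Pi.single (i, j, s) 1) =
            lam₀ • (if i = i₀ then
              (Pi.single (m₀, j, τ₀ * s) 1 : (Fin c × Fin b × G) → ℝ) else 0) := by
  constructor
  · intro hsub
    by_cases hS : ∃ p : Fin a × Fin c × G, lam p.1 p.2.1 p.2.2 ≠ 0
    · obtain ⟨⟨i₀, m₀, τ₀⟩, hp⟩ := hS
      refine ⟨i₀, m₀, τ₀, lam i₀ m₀ τ₀, hlam i₀ m₀ τ₀, ?_⟩
      intro i j s
      funext q
      obtain ⟨m, j', t⟩ := q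
      rw [Tmap_single_apply]
      have hrhs : (lam i₀ m₀ τ₀ • (if i = i₀ then
          (Pi.single (m₀, j, τ₀ * s) 1 : (Fin c × Fin b × G) → ℝ) else 0)) (m, j', t) =
          if i = i₀ ∧ m = m₀ ∧ j' = j ∧ t = τ₀ * s then lam i₀ m₀ τ₀ else 0 := by
        simp only [Pi.smul_apply, smul_eq_mul,
          apply_ite (fun g : (Fin c × Fin b × G) → ℝ => g (m, j', t)),
          Pi.zero_apply, Pi.single_apply, Prod.ext_iff, mul_ite, mul_one, mul_zero]
        by_cases hi : i = i₀ <;> by_cases h2 : m = m₀ <;> by_cases h3 : j' = j <;>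
          by_cases h4 : t = τ₀ * s <;> simp_all
      rw [hrhs]
      by_cases hj : j' = j
      · rw [if_pos hj]
        by_cases h2 : i = i₀ ∧ m = m₀ ∧ t = τ₀ * s
        · obtain ⟨rfl, rfl, rfl⟩ := h2
          have hst : s * (τ₀ * s) = τ₀ := by
            rw [mul_comm τ₀ s, ← mul_assoc, Int.units_mul_self, one_mul]
          rw [hst, if_pos ⟨rfl, rfl, hj, rfl⟩]
        · have hz : lam i m (s * t) = 0 := by
            by_contra h0
            have := hsub (show ((i, m, s * t) : Fin a × Fin c × G) ∈
              {p | lam p.1 p.2.1 p.2.2 ≠ 0} from h0) hp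
            simp only [Prod.ext_iff] at this
            obtain ⟨e1, e2, e3⟩ := this
            apply h2
            refine ⟨e1, e2, ?_⟩
            rw [← e3, mul_comm s t, mul_assoc, Int.units_mul_self, mul_one]
          rw [hz, if_neg (by tauto)]
      · rw [if_neg hj, if_neg (by tauto)]
    · push_neg at hS
      refine ⟨⟨0, ha⟩, ⟨0, hc⟩, 1, 0, le_refl 0, ?_⟩
      intro i j s
      funext q
      obtain ⟨m, j', t⟩ := q
      rw [Tmap_single_apply]
      have : lam i m (s * t) = 0 := hS (i, m, s * t)
      simp [this]
  · rintro ⟨i₀, m₀, τ₀, lam₀, h0, hf⟩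
    have claim : ∀ p ∈ {p : Fin a × Fin c × G | lam p.1 p.2.1 p.2.2 ≠ 0},
        p = (i₀, m₀, τ₀) := by
      rintro ⟨i, m, τ⟩ hr
      simp only [Set.mem_setOf_eq] at hr
      have := congrFun (hf i ⟨0, hb⟩ 1) (m, ⟨0, hb⟩, τ)
      rw [Tmap_single_apply, if_pos rfl, one_mul] at this
      by_contra hne
      apply hr
      rw [this]
      simp only [Pi.smul_apply, smul_eq_mul,
        apply_ite (fun g : (Fin c × Fin b × G) → ℝ => g (m, (⟨0, hb⟩ : Fin b), τ)),
        Pi.zero_apply, Pi.single_apply, mul_ite, mul_one, mul_zero]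
      by_cases hi : i = i₀
      · rw [if_pos hi, if_neg]
        intro h
        apply hne
        simp only [Prod.ext_iff] at h ⊢
        exact ⟨hi, h.1, h.2.2⟩
      · rw [if_neg hi]
    intro p hp q hq
    rw [claim p hp, claim q hq]

/-- Classification of the atomic transformations of BCT (Proposition 5): `T_λ`
is atomic iff `λ` is supported on at most one triple; equivalently, iff there are
`i₀, m₀, τ₀, λ₀ ≥ 0` with `T_λ(e(i,j,s)) = λ₀·(if i = i₀ then e(m₀,j,τ₀·s) else 0)`. -/
theorem bct_atomic_transformations_classified (a b c : ℕ)
    (ha : 0 < a) (hb : 0 < b) (hc : 0 < c)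
    (lam : Fin a → Fin c → G → ℝ) (hlam : ∀ i m τ, 0 ≤ lam i m τ) :
    (AtomicT a b c lam ↔
      {p : Fin a × Fin c × G | lam p.1 p.2.1 p.2.2 ≠ 0}.Subsingleton) ∧
    (AtomicT a b c lam ↔
      ∃ (i₀ : Fin a) (m₀ : Fin c) (τ₀ : G) (lam₀ : ℝ), 0 ≤ lam₀ ∧
        ∀ (i : Fin a) (j : Fin b) (s : G),
          Tmap a b c lam (Pi.single (i, j, s) 1) =
            lam₀ • (if i = i₀ then
              (Pi.single (m₀, j, τ₀ * s) 1 : (Fin c × Fin b × G) → ℝ) else 0)) := by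
  have h1 := atomic_iff_subsingleton a b c hb lam hlam
  exact ⟨h1, h1.trans (subsingleton_iff_formula a b c ha hb hc lam hlam)⟩
end

section
/- Let m_A : V → ℝ^(Fin a) be the linear marginal map with m_A(e(i,j,s)) = e i (the action of the unique deterministic effect of the second system, derived from the steering rule). Then m_A maps the standard simplex of V onto the standard simplex of ℝ^(Fin a) and maps every pure (vertex) state of the composite to a pure state of the first system. Consequently, a deterministic state of a BCT system is the marginal of a pure state of a bipartite composite only if it is itself pure: no mixed state of BCT admits a purification. -/
/-- The marginal map `m_A : ℝ^(Fin a × Fin b × G) → ℝ^(Fin a)` discarding the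
second system: the linear map with `m_A(e(i,j,s)) = e i` (derived from the
steering rule and the unique deterministic effect of the second system). -/
noncomputable def mA (a b : ℕ) : ((Fin a × Fin b × G) → ℝ) →ₗ[ℝ] (Fin a → ℝ) where
  toFun w := fun i => ∑ j : Fin b, ∑ s : G, w (i, j, s)
  map_add' := by
    intro x y
    funext i
    simp [Finset.sum_add_distrib]
  map_smul' := by
    intro r x
    funext i
    simp [Finset.mul_sum, mul_add]

lemma sum_ite_pair (b : ℕ) (x : ℝ) (j0 : Fin b) (s0 : G) :
    (∑ j : Fin b, ∑ s : G, if j = j0 ∧ s = s0 then x else 0) = x := by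
  have h1 : ∀ y : ℝ, (∑ s : G, if s = s0 then y else 0) = y := by
    intro y
    rw [Finset.sum_ite_eq' Finset.univ s0 (fun _ => y), if_pos (Finset.mem_univ s0)]
  have h2 : ∀ j : Fin b, (∑ s : G, if j = j0 ∧ s = s0 then x else 0)
      = if j = j0 then x else 0 := by
    intro j
    by_cases hj : j = j0
    · simp only [hj, true_and, if_true]
      exact h1 x
    · simp [hj]
  simp only [h2]
  rw [Finset.sum_ite_eq' Finset.univ j0 (fun _ => x), if_pos (Finset.mem_univ j0)]

lemma mA_single (a b : ℕ) (i : Fin a) (j : Fin b) (s : G) :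
    mA a b (Pi.single (i, j, s) 1) = (Pi.single i 1 : Fin a → ℝ) := by
  funext i'
  simp only [mA, LinearMap.coe_mk, AddHom.coe_mk, Pi.single_apply, Prod.mk.injEq]
  by_cases h : i' = i
  · subst h
    simp only [eq_self_iff_true, true_and, if_true]
    exact sum_ite_pair b 1 j s
  · simp [h]

/-- `m_A` maps the standard simplex of the composite onto the standard simplex of
the first system and sends every pure (vertex) state of the composite to a pure
state of the first system; consequently a deterministic state of a BCT system is
the marginal of a pure state of a bipartite composite only if it is itself pure:
no mixed state of BCT admits a purification. -/
theorem bct_no_purification (a b : ℕ) (ha : 0 < a) (hb : 0 < b) :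
    (mA a b '' stdSimplex ℝ (Fin a × Fin b × G) = stdSimplex ℝ (Fin a)) ∧
    (∀ (i : Fin a) (j : Fin b) (s : G),
      mA a b (Pi.single (i, j, s) 1) = (Pi.single i 1 : Fin a → ℝ)) ∧
    (∀ ρ : Fin a → ℝ, ρ ∈ stdSimplex ℝ (Fin a) →
      (∃ p : Fin a × Fin b × G, mA a b (Pi.single p 1) = ρ) →
      ∃ i : Fin a, ρ = (Pi.single i 1 : Fin a → ℝ)) := by
  refine ⟨?_, mA_single a b, ?_⟩
  · apply subset_antisymm
    · rintro _ ⟨w, ⟨hw0, hw1⟩, rfl⟩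
      constructor
      · intro i
        show (0:ℝ) ≤ ∑ j : Fin b, ∑ s : G, w (i, j, s)
        exact Finset.sum_nonneg fun j _ => Finset.sum_nonneg fun s _ => hw0 _
      · show (∑ i : Fin a, ∑ j : Fin b, ∑ s : G, w (i, j, s)) = 1
        rw [← hw1, Fintype.sum_prod_type]
        simp [Fintype.sum_prod_type]
    · rintro ρ ⟨h0, h1⟩
      refine ⟨fun p => if p.2.1 = ⟨0, hb⟩ ∧ p.2.2 = 1 then ρ p.1 else 0, ⟨?_, ?_⟩, ?_⟩
      · intro p; dsimp only; split <;> simp [h0]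
      · rw [Fintype.sum_prod_type]
        simp only [Fintype.sum_prod_type]
        rw [← h1]
        exact Finset.sum_congr rfl fun i _ => sum_ite_pair b (ρ i) ⟨0, hb⟩ 1
      · funext i
        exact sum_ite_pair b (ρ i) ⟨0, hb⟩ 1
  · rintro ρ hρ ⟨⟨i, j, s⟩, rfl⟩
    exact ⟨i, mA_single a b i j s⟩
end
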